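/- Let T be a tournament whose directed domination graph contains a directed Hamiltonian cycle C (a directed cycle visiting all vertices of T). Then the vertex set of T is the unique minimal τ-retentive set of T; in particular Schwartz's Conjecture holds for T. -/

import Mathlib

variable {V : Type}

/-- Inneighbors of `v` inside the subtournament on `s` (excluding `v` itself). -/
def inn [DecidableEq V] (r : V → V → Prop) [DecidableRel r] (s : Finset V) (v : V) :
    Finset V :=
  (s.filter fun u => r u v).erase v

lemma inn_card_lt [DecidableEq V] (r : V → V → Prop) [DecidableRel r]
    (s : Finset V) (v : V) (hv : v ∈ s) : (inn r s v).card < s.card := by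
  have h1 : inn r s v ⊆ s.erase v := by
    intro x hx
    rcases Finset.mem_erase.mp hx with ⟨hxv, hx2⟩
    exact Finset.mem_erase.mpr ⟨hxv, (Finset.mem_filter.mp hx2).1⟩
  calc (inn r s v).card ≤ (s.erase v).card := Finset.card_le_card h1
    _ < s.card := Finset.card_erase_lt_of_mem hv

/-- The tournament equilibrium set of the subtournament of `r` on `s`:
the union of all minimal τ-retentive sets. -/
def tau [DecidableEq V] (r : V → V → Prop) [DecidableRel r] (s : Finset V) : Set V :=
  {x | ∃ A : Finset V, x ∈ A ∧ A ⊆ s ∧ A.Nonempty ∧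
    (∀ v, v ∈ s → v ∈ A → ((inn r s v).Nonempty → tau r (inn r s v) ⊆ ↑A)) ∧
    ∀ B : Finset V, B ⊆ s → B ⊂ A →
      ¬ (B.Nonempty ∧
        ∀ v, v ∈ s → v ∈ B → ((inn r s v).Nonempty → tau r (inn r s v) ⊆ ↑B))}
termination_by s.card
decreasing_by
  all_goals exact inn_card_lt r s v (by assumption)

/-- `A` is a τ-retentive set of the tournament on `s`. -/
def Retentive [DecidableEq V] (r : V → V → Prop) [DecidableRel r] (s A : Finset V) : Prop :=
  A ⊆ s ∧ A.Nonempty ∧ ∀ v ∈ A, (inn r s v).Nonempty → tau r (inn r s v) ⊆ ↑A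

/-- `A` is a minimal τ-retentive set of the tournament on `s`. -/
def MinRetentive [DecidableEq V] (r : V → V → Prop) [DecidableRel r] (s A : Finset V) : Prop :=
  Retentive r s A ∧ ∀ B, Retentive r s B → B ⊆ A → B = A

/-- `r` is a tournament on the vertex set `s`. -/
def IsTournament (r : V → V → Prop) (s : Finset V) : Prop :=
  (∀ v ∈ s, ¬ r v v) ∧ ∀ u ∈ s, ∀ v ∈ s, u ≠ v → (r u v ↔ ¬ r v u)

/-- `u` is the captain of `v` in the subtournament on `s`:
`u` dominates `v` and all other inneighbors of `v`. -/
def IsCaptain (r : V → V → Prop) (s : Finset V) (u v : V) : Prop :=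
  u ∈ s ∧ v ∈ s ∧ r u v ∧ ∀ w ∈ s, w ≠ u → r w v → r u w

/-- The (undirected) domination graph of the subtournament on `s`. -/
def domGraph (r : V → V → Prop) (s : Finset V) : SimpleGraph V where
  Adj u v := (IsCaptain r s u v ∨ IsCaptain r s v u) ∧ u ≠ v
  symm := by
    constructor
    intro u v h
    exact ⟨h.1.symm, h.2.symm⟩
  loopless := by
    constructor
    intro u h
    exact h.2 rfl

/-!
If `u` is the captain of `v`, then `u` is a Condorcet winner of the subtournament on the
inneighbors of `v`, hence lies in its τ-set; so every τ-retentive set containing `v` also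
contains `u`. Walking the Hamiltonian cycle of captains backwards from any vertex of a
τ-retentive set reaches every vertex, so the whole vertex set is the only τ-retentive set.
-/

open Fin.NatCast in
theorem Fin.forall_of_add_one_imp {n : ℕ} [NeZero n] {P : Fin n → Prop}
    (h : ∀ i, P (i + 1) → P i) (i₀ : Fin n) (hi₀ : P i₀) (j : Fin n) : P j := by
  have shift : ∀ m : ℕ, ∀ i : Fin n, P (i + m) → P i := by
    intro m
    induction m with
    | zero => simp
    | succ m ih =>
      intro i hi
      refine h i (ih (i + 1) ?_)
      rwa [Nat.cast_succ, add_comm (m : Fin n), ← add_assoc] at hi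
  exact shift (i₀ - j).val j (by simpa using hi₀)

section Tau

variable [DecidableEq V] {r : V → V → Prop} [DecidableRel r] {s : Finset V}

@[simp]
theorem mem_inn {v w : V} : w ∈ inn r s v ↔ w ≠ v ∧ w ∈ s ∧ r w v := by
  simp [inn]

theorem tau_subset : tau r s ⊆ ↑s := by
  intro x hx
  rw [tau] at hx
  obtain ⟨A, hxA, hAs, -⟩ := hx
  exact hAs hxA

theorem mem_tau_of_forall_not_rel {u : V} (hu : u ∈ s) (hwin : ∀ w ∈ s, w ≠ u → ¬ r w u) :
    u ∈ tau r s := by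
  rw [tau]
  refine ⟨{u}, Finset.mem_singleton_self u, Finset.singleton_subset_iff.mpr hu,
    Finset.singleton_nonempty u, ?_, ?_⟩
  · rintro v - hv ⟨w, hw⟩
    rw [Finset.mem_singleton.mp hv, mem_inn] at hw
    exact absurd hw.2.2 (hwin w hw.2.1 hw.1)
  · intro B _ hB ⟨hBne, _⟩
    rw [Finset.ssubset_singleton_iff.mp hB] at hBne
    exact Finset.not_nonempty_empty hBne

theorem IsCaptain.mem_tau_inn (hT : IsTournament r s) {u v : V} (h : IsCaptain r s u v) :
    u ∈ tau r (inn r s v) := by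
  obtain ⟨hu, hv, huv, hdom⟩ := h
  have hne : u ≠ v := by
    rintro rfl
    exact hT.1 u hu huv
  refine mem_tau_of_forall_not_rel (mem_inn.mpr ⟨hne, hu, huv⟩) fun w hw hwu => ?_
  obtain ⟨-, hws, hwv⟩ := mem_inn.mp hw
  exact (hT.2 u hu w hws hwu.symm).mp (hdom w hws hwu hwv)

theorem Retentive.mem_of_isCaptain {A : Finset V} (hA : Retentive r s A)
    (hT : IsTournament r s) {u v : V} (h : IsCaptain r s u v) (hv : v ∈ A) : u ∈ A := by
  have hu := h.mem_tau_inn hT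
  exact hA.2.2 v hv ⟨u, tau_subset hu⟩ hu

theorem retentive_self (hs : s.Nonempty) : Retentive r s s :=
  ⟨subset_rfl, hs, fun _ _ _ => tau_subset.trans fun _ hw => (mem_inn.mp hw).2.1⟩

theorem minRetentive_self_of_forall_retentive_eq (hs : s.Nonempty)
    (h : ∀ A, Retentive r s A → A = s) :
    MinRetentive r s s ∧ ∀ B, MinRetentive r s B → B = s :=
  ⟨⟨retentive_self hs, fun B hB _ => h B hB⟩, fun B hB => h B hB.1⟩

end Tau

theorem stmt14_general [DecidableEq V] (r : V → V → Prop) [DecidableRel r] (s : Finset V)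
    (hT : IsTournament r s)
    (n : ℕ) (hn : 0 < n) (c : Fin n → V)
    (hham : ∀ x, x ∈ s ↔ ∃ i, c i = x)
    (hcyc : ∀ i : Fin n, IsCaptain r s (c i) (c ⟨(i.val + 1) % n, Nat.mod_lt _ hn⟩)) :
    MinRetentive r s s ∧ ∀ B, MinRetentive r s B → B = s := by
  have : NeZero n := ⟨hn.ne'⟩
  have hsucc : ∀ i : Fin n, (⟨(i.val + 1) % n, Nat.mod_lt _ hn⟩ : Fin n) = i + 1 := fun i =>
    Fin.ext (by simp [Fin.val_add, Nat.add_mod_mod])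
  refine minRetentive_self_of_forall_retentive_eq ⟨_, (hham _).mpr ⟨⟨0, hn⟩, rfl⟩⟩ fun A hA => ?_
  obtain ⟨x, hx⟩ := hA.2.1
  obtain ⟨i₀, rfl⟩ := (hham x).mp (hA.1 hx)
  have hall : ∀ j, c j ∈ A := Fin.forall_of_add_one_imp
    (fun i hi => hA.mem_of_isCaptain hT (hcyc i) (by rwa [hsucc])) i₀ hx
  refine hA.1.antisymm fun y hy => ?_
  obtain ⟨j, rfl⟩ := (hham y).mp hy
  exact hall j

theorem stmt14 [DecidableEq V] (r : V → V → Prop) [DecidableRel r] (s : Finset V)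
    (hT : IsTournament r s)
    (n : ℕ) (hn : 0 < n) (c : Fin n → V) (hinj : Function.Injective c)
    (hham : ∀ x, x ∈ s ↔ ∃ i, c i = x)
    (hcyc : ∀ i : Fin n, IsCaptain r s (c i) (c ⟨(i.val + 1) % n, Nat.mod_lt _ hn⟩)) :
    MinRetentive r s s ∧ ∀ B, MinRetentive r s B → B = s :=
  stmt14_general r s hT n hn c hham hcyc
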